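/- With the power structure of the previous construction, one has (A(t)·B(t))^m = A(t)^m · B(t)^m for all series A(t), B(t) ∈ 1 + t·R[[t]] and all m ∈ R. -/

import Mathlib

/-- Substitution `t ↦ t^k` in a formal power series. -/
noncomputable def substPow {R : Type*} [CommRing R] (k : ℕ) (A : PowerSeries R) :
    PowerSeries R :=
  PowerSeries.mk fun n => if k ∣ n then PowerSeries.coeff (R := R) (n / k) A else 0

/-- The infinite product `∏_{i ≥ 1} f i`, well defined (coefficientwise) whenever
`f i ≡ 1 mod t^i`. -/
noncomputable def infProd {R : Type*} [CommRing R] (f : ℕ → PowerSeries R) : PowerSeries R :=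
  PowerSeries.mk fun n => PowerSeries.coeff (R := R) n (∏ i ∈ Finset.Icc 1 n, f i)

/-- The power structure: given the family `E a = (1-t)^{-a}` and the exponents `a i` of the
unique decomposition `A(t) = ∏_{i≥1} (1-t^i)^{-a_i}`, the series
`A(t)^m := ∏_{i≥1} (1-t^i)^{-a_i m}`. -/
noncomputable def psPow {R : Type*} [CommRing R] (E : R → PowerSeries R) (a : ℕ → R)
    (m : R) : PowerSeries R :=
  infProd fun i => substPow i (E (a i * m))

/-!
Substitution `t ↦ t^k` is the ring endomorphism `PowerSeries.expand k` and `E (x + y) = E x * E y`,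
so Euler products `∏ (1-t^i)^{-x_i}` multiply by adding exponents. The exponents are unique, since
the `n`-th coefficient of such a product is `x_n` plus a function of `x_1, …, x_{n-1}`; hence the
exponents of `A·B` are `a + b`, and multiplying them by `m` keeps them additive.
-/

open PowerSeries Finset

section SubstPow

variable {R : Type*} [CommRing R]

theorem substPow_eq_expand {k : ℕ} (hk : k ≠ 0) (A : R⟦X⟧) : substPow k A = expand k hk A := by
  ext n
  simp [substPow, coeff_expand]

theorem substPow_mul {k : ℕ} (hk : k ≠ 0) (A B : R⟦X⟧) :
    substPow k (A * B) = substPow k A * substPow k B := by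
  simp only [substPow_eq_expand hk, map_mul]

theorem coeff_substPow_self {k : ℕ} (hk : k ≠ 0) (A : R⟦X⟧) :
    coeff k (substPow k A) = coeff 1 A := by
  simpa [substPow_eq_expand hk] using coeff_expand_mul k hk A 1

theorem X_pow_dvd_substPow_sub_one (k : ℕ) {A : R⟦X⟧} (hA : constantCoeff A = 1) :
    X ^ k ∣ substPow k A - 1 := by
  rcases eq_or_ne k 0 with rfl | hk
  · simp
  rw [substPow_eq_expand hk, ← map_one (expand k hk), ← map_sub, ← expand_X k hk]
  exact map_dvd _ (X_dvd_iff.mpr (by simp [hA]))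

end SubstPow

section InfProd

variable {R : Type*} [CommRing R] {f g : ℕ → R⟦X⟧}

theorem coeff_mul_eq_left_of_X_pow_dvd_sub_one {P Q : R⟦X⟧} {n k : ℕ} (hnk : n < k)
    (hQ : X ^ k ∣ Q - 1) : coeff n (P * Q) = coeff n P := by
  have h : coeff n (P * (Q - 1)) = 0 := X_pow_dvd_iff.mp (dvd_mul_of_dvd_right hQ P) n hnk
  rwa [mul_sub, mul_one, map_sub, sub_eq_zero] at h

theorem constantCoeff_eq_one_of_X_pow_dvd_sub_one {Q : R⟦X⟧} {k : ℕ} (hk : 0 < k)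
    (hQ : X ^ k ∣ Q - 1) : constantCoeff Q = 1 := by
  have h := X_dvd_iff.mp ((dvd_pow_self X hk.ne').trans hQ)
  rwa [map_sub, map_one, sub_eq_zero] at h

theorem coeff_mul_of_X_pow_dvd_sub_one {P Q : R⟦X⟧} {n : ℕ} (hn : 0 < n)
    (hP : constantCoeff P = 1) (hQ : X ^ n ∣ Q - 1) :
    coeff n (P * Q) = coeff n P + coeff n Q := by
  obtain ⟨G, hG⟩ := hQ
  rw [sub_eq_iff_eq_add'] at hG
  subst hG
  simp [mul_add, mul_left_comm P, coeff_X_pow_mul', coeff_one, hn.ne', hP]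

theorem coeff_prod_Icc_of_le (hf : ∀ i, X ^ i ∣ f i - 1) {n N : ℕ} (hnN : n ≤ N) :
    coeff n (∏ i ∈ Icc 1 N, f i) = coeff n (∏ i ∈ Icc 1 n, f i) := by
  induction N, hnN using Nat.le_induction with
  | base => rfl
  | succ N hnN ih =>
    rw [prod_Icc_succ_top (by omega), coeff_mul_eq_left_of_X_pow_dvd_sub_one (by omega) (hf _), ih]

theorem coeff_infProd_of_le (hf : ∀ i, X ^ i ∣ f i - 1) {n N : ℕ} (hnN : n ≤ N) :
    coeff n (infProd f) = coeff n (∏ i ∈ Icc 1 N, f i) := by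
  rw [infProd, coeff_mk, coeff_prod_Icc_of_le hf hnN]

theorem coeff_infProd_eq_add (hf : ∀ i, X ^ i ∣ f i - 1) {n : ℕ} (hn : 0 < n) :
    coeff n (infProd f) = coeff n (∏ i ∈ Ico 1 n, f i) + coeff n (f n) := by
  rw [infProd, coeff_mk, ← Ico_insert_right hn, prod_insert (by simp), mul_comm]
  refine coeff_mul_of_X_pow_dvd_sub_one hn ?_ (hf n)
  rw [map_prod]
  exact prod_eq_one fun i hi => constantCoeff_eq_one_of_X_pow_dvd_sub_one (mem_Ico.mp hi).1 (hf i)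

theorem infProd_mul (hf : ∀ i, X ^ i ∣ f i - 1) (hg : ∀ i, X ^ i ∣ g i - 1) :
    infProd (fun i => f i * g i) = infProd f * infProd g := by
  ext n
  rw [infProd, coeff_mk, prod_mul_distrib, coeff_mul, coeff_mul]
  refine sum_congr rfl fun pq hpq => ?_
  have hsum := mem_antidiagonal.mp hpq
  rw [coeff_infProd_of_le hf (by omega : pq.1 ≤ n), coeff_infProd_of_le hg (by omega : pq.2 ≤ n)]

theorem infProd_congr (h : ∀ i, 0 < i → f i = g i) : infProd f = infProd g := by
  ext n
  rw [infProd, infProd, coeff_mk, coeff_mk, prod_congr rfl fun i hi => h i (mem_Icc.mp hi).1]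

end InfProd

section Exponents

variable {R : Type*} [CommRing R] {E : R → R⟦X⟧}

theorem infProd_substPow_add (hE0 : ∀ a, constantCoeff (E a) = 1)
    (hEadd : ∀ a b, E (a + b) = E a * E b) (x y : ℕ → R) :
    (infProd fun i => substPow i (E (x i + y i))) =
      (infProd fun i => substPow i (E (x i))) * infProd fun i => substPow i (E (y i)) := by
  rw [← infProd_mul (fun i => X_pow_dvd_substPow_sub_one i (hE0 _))
    (fun i => X_pow_dvd_substPow_sub_one i (hE0 _))]
  exact infProd_congr fun i hi => by rw [hEadd, substPow_mul hi.ne']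

theorem eq_of_infProd_substPow_eq (hE0 : ∀ a, constantCoeff (E a) = 1)
    (hE1 : ∀ a, coeff 1 (E a) = a) {x y : ℕ → R}
    (h : (infProd fun i => substPow i (E (x i))) = infProd fun i => substPow i (E (y i))) :
    ∀ n, 0 < n → x n = y n := by
  intro n
  induction n using Nat.strong_induction_on with
  | _ n ih =>
    intro hn
    have hprod : ∏ i ∈ Ico 1 n, substPow i (E (x i)) = ∏ i ∈ Ico 1 n, substPow i (E (y i)) :=
      prod_congr rfl fun i hi => by rw [ih i (mem_Ico.mp hi).2 (mem_Ico.mp hi).1]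
    have hcoeff := congrArg (coeff n) h
    rw [coeff_infProd_eq_add (fun i => X_pow_dvd_substPow_sub_one i (hE0 _)) hn,
      coeff_infProd_eq_add (fun i => X_pow_dvd_substPow_sub_one i (hE0 _)) hn, hprod,
      coeff_substPow_self hn.ne', coeff_substPow_self hn.ne', hE1, hE1] at hcoeff
    exact add_left_cancel hcoeff

end Exponents

theorem stmt2_general {R : Type*} [CommRing R] (E : R → PowerSeries R)
    (hE0 : ∀ a, PowerSeries.constantCoeff (R := R) (E a) = 1)
    (hEadd : ∀ a b, E (a + b) = E a * E b)
    (hE1 : ∀ a, PowerSeries.coeff (R := R) 1 (E a) = a)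
    (A B : PowerSeries R) (a b c : ℕ → R)
    (hA : A = infProd fun i => substPow i (E (a i)))
    (hB : B = infProd fun i => substPow i (E (b i)))
    (hAB : A * B = infProd fun i => substPow i (E (c i))) :
    ∀ m : R, psPow E c m = psPow E a m * psPow E b m := by
  have hc : ∀ i, 0 < i → c i = a i + b i :=
    eq_of_infProd_substPow_eq hE0 hE1 (by rw [← hAB, hA, hB, infProd_substPow_add hE0 hEadd])
  intro m
  rw [psPow, psPow, psPow, ← infProd_substPow_add hE0 hEadd]
  exact infProd_congr fun i hi => by rw [hc i hi, add_mul]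

/-- With the power structure defined via the unique infinite-product decompositions,
`(A(t)·B(t))^m = A(t)^m · B(t)^m`: here `a`, `b`, `c` are the decomposition exponents of
`A`, `B` and `A·B` respectively. -/
theorem stmt2 {R : Type*} [CommRing R] (E : R → PowerSeries R)
    (hE0 : ∀ a, PowerSeries.constantCoeff (R := R) (E a) = 1)
    (hEadd : ∀ a b, E (a + b) = E a * E b)
    (hE1 : ∀ a, PowerSeries.coeff (R := R) 1 (E a) = a)
    (hEone : E 1 = PowerSeries.mk fun _ => (1 : R))
    (A B : PowerSeries R) (a b c : ℕ → R)
    (hA : A = infProd fun i => substPow i (E (a i)))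
    (hB : B = infProd fun i => substPow i (E (b i)))
    (hAB : A * B = infProd fun i => substPow i (E (c i))) :
    ∀ m : R, psPow E c m = psPow E a m * psPow E b m :=
  stmt2_general E hE0 hEadd hE1 A B a b c hA hB hAB
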